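/- Define the weight-2 murmuration density 𝓜₂(y) := α·Σ_{r ∈ ℕ, 1 ≤ r ≤ 2√y} ν(r)·√(4y − r²) + β·√y − γ·y for y ≥ 0, and set I(y) := (2/3)·∫_1^2 u·𝓜₂(y/u) du, a := (4/9)(2√2 − 1)·β, b := (2/3)·γ, c := (2/3)·α. Then: (i) for y ∈ [0, 1/4], I(y) = a√y − by; (ii) for y ∈ [1/4, 1/2], I(y) = a√y − by + c·(πy² − (1 − 2y)√(y − 1/4) − 2y²·arcsin(1/(2y) − 1)); (iii) for y ∈ [1/2, 1], I(y) = a√y − by + c·(2y²·(arcsin(1/y − 1) − arcsin(1/(2y) − 1)) − (1 − 2y)√(y − 1/4) + 2(1 − y)√(2y − 1)). -/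

import Mathlib

/-- `α = 2π ∏_p (p⁴ - 2p² - p + 1)/(p⁴ - 2p² + p)`. -/
noncomputable def alphaC : ℝ :=
  2 * Real.pi * ∏' p : Nat.Primes,
    ((((p : ℕ) : ℝ) ^ 4 - 2 * ((p : ℕ) : ℝ) ^ 2 - ((p : ℕ) : ℝ) + 1) /
      (((p : ℕ) : ℝ) ^ 4 - 2 * ((p : ℕ) : ℝ) ^ 2 + ((p : ℕ) : ℝ)))

/-- `β = 2π ∏_p (p³ + p² - 1)/(p (p² + p - 1))`. -/
noncomputable def betaC : ℝ :=
  2 * Real.pi * ∏' p : Nat.Primes,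
    ((((p : ℕ) : ℝ) ^ 3 + ((p : ℕ) : ℝ) ^ 2 - 1) /
      (((p : ℕ) : ℝ) * (((p : ℕ) : ℝ) ^ 2 + ((p : ℕ) : ℝ) - 1)))

/-- `γ = 12 ∏_p p(p+1)/(p² + p - 1)`. -/
noncomputable def gammaC : ℝ :=
  12 * ∏' p : Nat.Primes,
    (((p : ℕ) : ℝ) * (((p : ℕ) : ℝ) + 1) / (((p : ℕ) : ℝ) ^ 2 + ((p : ℕ) : ℝ) - 1))

/-- `ν(r) = ∏_{p prime, p ∣ r} (1 + p² / (p⁴ - 2p² - p + 1))`. -/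
noncomputable def nu (r : ℕ) : ℝ :=
  ∏ p ∈ r.primeFactors,
    (1 + (p : ℝ) ^ 2 / ((p : ℝ) ^ 4 - 2 * (p : ℝ) ^ 2 - (p : ℝ) + 1))

/-- The weight-2 murmuration density
`𝓜₂(y) = α Σ_{1 ≤ r ≤ 2√y} ν(r) √(4y - r²) + β √y - γ y`. -/
noncomputable def M2 (y : ℝ) : ℝ :=
  alphaC * ∑ r ∈ Finset.Icc 1 ⌊2 * Real.sqrt y⌋₊, nu r * Real.sqrt (4 * y - (r : ℝ) ^ 2)
    + betaC * Real.sqrt y - gammaC * y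

/-- `I(y) = (2/3) ∫_1^2 u · 𝓜₂(y/u) du`. -/
noncomputable def Ifun (y : ℝ) : ℝ := (2 / 3) * ∫ u in (1 : ℝ)..2, u * M2 (y / u)

/-- `a = (4/9)(2√2 - 1) β`. -/
noncomputable def aC : ℝ := (4 / 9) * (2 * Real.sqrt 2 - 1) * betaC

/-- `b = (2/3) γ`. -/
noncomputable def bC : ℝ := (2 / 3) * gammaC

/-- `c = (2/3) α`. -/
noncomputable def cC : ℝ := (2 / 3) * alphaC

/-!
For `y ≤ 1` and `u ∈ [1, 2]` only `r = 1` survives in `𝓜₂(y/u)`, and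
`u √(4y/u - 1) = √((2y)² - (u - 2y)²)` is the upper half of the circle of radius `2y` centred
at `2y`. Hence `(3/2) I(y)` is `β √y ∫₁² √u`, minus `γ y`, plus `α` times the area of that half disc
over `[1, 2]`. The three cases are `4y ≤ 1` (the disc misses `[1, 2]`), `1 ≤ 4y ≤ 2` and `4y ≥ 2`.
-/

open Real

/-- Signed area under `s ↦ √(R² - s²)` over `[0, t]`; for `t ≥ R` the square root clamps at `0`
and `arcsin` at `π / 2`, so the value stays `π R² / 4` and serves as a primitive on all of
`[-R, ∞)`. -/
noncomputable def semicircleArea (R t : ℝ) : ℝ :=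
  (t * √(R ^ 2 - t ^ 2) + R ^ 2 * arcsin (t / R)) / 2

lemma semicircleArea_of_le {R t : ℝ} (hR : 0 ≤ R) (ht : R ≤ t) :
    semicircleArea R t = π * R ^ 2 / 4 := by
  rcases hR.eq_or_lt with rfl | hR
  · simp [semicircleArea, sqrt_eq_zero_of_nonpos (neg_nonpos.2 (sq_nonneg t))]
  · rw [semicircleArea, sqrt_eq_zero_of_nonpos (by nlinarith),
      arcsin_of_one_le ((one_le_div hR).2 ht)]
    ring

lemma continuous_semicircleArea (R : ℝ) : Continuous (semicircleArea R) := by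
  unfold semicircleArea
  fun_prop

lemma hasDerivAt_semicircleArea {R t : ℝ} (h₁ : -R < t) (h₂ : t < R) :
    HasDerivAt (semicircleArea R) √(R ^ 2 - t ^ 2) t := by
  have hR : 0 < R := by linarith
  have hpos : 0 < R ^ 2 - t ^ 2 := by nlinarith
  have hsqrt : HasDerivAt (fun t => √(R ^ 2 - t ^ 2)) (-t / √(R ^ 2 - t ^ 2)) t := by
    convert ((hasDerivAt_pow 2 t).const_sub (R ^ 2)).sqrt hpos.ne' using 1
    ring
  have harcsin : HasDerivAt (fun t => arcsin (t / R)) (1 / √(R ^ 2 - t ^ 2)) t := by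
    have hne₁ : t / R ≠ -1 := by rw [Ne, div_eq_iff hR.ne']; linarith
    have hne₂ : t / R ≠ 1 := by rw [Ne, div_eq_iff hR.ne']; linarith
    refine ((hasDerivAt_arcsin hne₁ hne₂).comp t ((hasDerivAt_id t).div_const R)).congr_deriv ?_
    rw [show 1 - (t / R) ^ 2 = (R ^ 2 - t ^ 2) / R ^ 2 by field_simp,
      sqrt_div hpos.le, sqrt_sq hR.le]
    field_simp
  have hs : √(R ^ 2 - t ^ 2) ^ 2 = R ^ 2 - t ^ 2 := sq_sqrt hpos.le
  have hs0 : √(R ^ 2 - t ^ 2) ≠ 0 := (sqrt_pos.2 hpos).ne'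
  refine ((((hasDerivAt_id t).mul hsqrt).add (harcsin.const_mul (R ^ 2))).div_const 2).congr_deriv
    ?_
  simp only [id]
  field_simp
  linear_combination (-1) * hs

lemma integral_sqrt_sq_sub_sq {R a b : ℝ} (hR : 0 ≤ R) (ha : -R ≤ a) (hab : a ≤ b) :
    ∫ t in a..b, √(R ^ 2 - t ^ 2) = semicircleArea R b - semicircleArea R a := by
  refine intervalIntegral.integral_eq_sub_of_hasDeriv_right_of_le hab
    (continuous_semicircleArea R).continuousOn (fun t ht => ?_)
    (Continuous.intervalIntegrable (by fun_prop) a b)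
  rcases lt_or_ge t R with htR | hRt
  · exact (hasDerivAt_semicircleArea (by linarith [ht.1]) htR).hasDerivWithinAt
  · rw [sqrt_eq_zero_of_nonpos (by nlinarith)]
    exact (hasDerivWithinAt_const t _ (π * R ^ 2 / 4)).congr
      (fun s hs => semicircleArea_of_le hR (hRt.trans (le_of_lt hs)))
      (semicircleArea_of_le hR hRt)

lemma semicircleArea_one_sub_two_mul {y : ℝ} (hy : 0 < y) :
    semicircleArea (2 * y) (1 - 2 * y) =
      (1 - 2 * y) * √(y - 1 / 4) + 2 * y ^ 2 * arcsin (1 / (2 * y) - 1) := by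
  rw [semicircleArea, show (2 * y) ^ 2 - (1 - 2 * y) ^ 2 = 2 ^ 2 * (y - 1 / 4) by ring,
    sqrt_mul (by norm_num), sqrt_sq zero_le_two,
    show (1 - 2 * y) / (2 * y) = 1 / (2 * y) - 1 by field_simp]
  ring

lemma semicircleArea_two_sub_two_mul {y : ℝ} (hy : 0 < y) :
    semicircleArea (2 * y) (2 - 2 * y) =
      2 * (1 - y) * √(2 * y - 1) + 2 * y ^ 2 * arcsin (1 / y - 1) := by
  rw [semicircleArea, show (2 * y) ^ 2 - (2 - 2 * y) ^ 2 = 2 ^ 2 * (2 * y - 1) by ring,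
    sqrt_mul (by norm_num), sqrt_sq zero_le_two,
    show (2 - 2 * y) / (2 * y) = 1 / y - 1 by field_simp]
  ring

lemma sum_nu_mul_sqrt_of_le_one {x : ℝ} (hx : x ≤ 1) :
    ∑ r ∈ Finset.Icc 1 ⌊2 * √x⌋₊, nu r * √(4 * x - (r : ℝ) ^ 2) = √(4 * x - 1) := by
  rw [Finset.sum_eq_single 1]
  · simp [nu]
  · intro r hr hr1
    have hr2 : (2 : ℝ) ≤ r := by
      have hr₁ := (Finset.mem_Icc.1 hr).1
      exact_mod_cast (by omega : 2 ≤ r)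
    rw [sqrt_eq_zero_of_nonpos (by nlinarith), mul_zero]
  · intro h1
    have hfloor : 2 * √x < 1 := by
      rw [← Nat.floor_eq_zero]
      simpa using h1
    have hx4 : x < (1 / 2) ^ 2 := (sqrt_lt' (by norm_num)).1 (by linarith)
    rw [sqrt_eq_zero_of_nonpos (by push_cast; linarith), mul_zero]

lemma mul_M2_div {y u : ℝ} (hy : 0 ≤ y) (hu : 0 < u) (hyu : y ≤ u) :
    u * M2 (y / u) =
      alphaC * √((2 * y) ^ 2 - (u - 2 * y) ^ 2) + betaC * √y * √u - gammaC * y := by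
  rw [M2, sum_nu_mul_sqrt_of_le_one ((div_le_one hu).2 hyu)]
  have h₁ : u * √(4 * (y / u) - 1) = √((2 * y) ^ 2 - (u - 2 * y) ^ 2) := by
    rw [show (2 * y) ^ 2 - (u - 2 * y) ^ 2 = u ^ 2 * (4 * (y / u) - 1) by field_simp; ring,
      sqrt_mul (sq_nonneg u), sqrt_sq hu.le]
  have h₂ : u * √(y / u) = √y * √u := by
    rw [sqrt_div hy, mul_div_assoc', div_eq_iff (sqrt_pos.2 hu).ne', mul_assoc,
      mul_self_sqrt hu.le, mul_comm]
  have h₃ : u * (y / u) = y := mul_div_cancel₀ y hu.ne'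
  linear_combination alphaC * h₁ + betaC * h₂ - gammaC * h₃

lemma integral_sqrt_one_two : ∫ u in (1 : ℝ)..2, √u = 2 / 3 * (2 * √2 - 1) := by
  simp only [sqrt_eq_rpow]
  rw [integral_rpow (Or.inl (by norm_num)), show (1 : ℝ) / 2 + 1 = 1 + 1 / 2 by norm_num,
    rpow_add two_pos, rpow_one, one_rpow]
  ring

lemma Ifun_eq_semicircleArea {y : ℝ} (hy₀ : 0 ≤ y) (hy₁ : y ≤ 1) :
    Ifun y = aC * √y - bC * y +
      cC * (semicircleArea (2 * y) (2 - 2 * y) - semicircleArea (2 * y) (1 - 2 * y)) := by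
  have hsemicircle : ∫ u in (1 : ℝ)..2, √((2 * y) ^ 2 - (u - 2 * y) ^ 2) =
      semicircleArea (2 * y) (2 - 2 * y) - semicircleArea (2 * y) (1 - 2 * y) := by
    rw [intervalIntegral.integral_comp_sub_right (fun t => √((2 * y) ^ 2 - t ^ 2)),
      integral_sqrt_sq_sub_sq (by positivity) (by linarith) (by linarith)]
  have hA : IntervalIntegrable (fun u => alphaC * √((2 * y) ^ 2 - (u - 2 * y) ^ 2))
      MeasureTheory.volume 1 2 := Continuous.intervalIntegrable (by fun_prop) 1 2
  have hB : IntervalIntegrable (fun u => betaC * √y * √u) MeasureTheory.volume 1 2 :=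
    Continuous.intervalIntegrable (by fun_prop) 1 2
  have hM2 : Set.EqOn (fun u => u * M2 (y / u))
      (fun u => alphaC * √((2 * y) ^ 2 - (u - 2 * y) ^ 2) + betaC * √y * √u - gammaC * y)
      (Set.uIcc 1 2) := by
    intro u hu
    have hu₁ : (1 : ℝ) ≤ u := (Set.uIcc_of_le (one_le_two (α := ℝ)) ▸ hu).1
    exact mul_M2_div hy₀ (by linarith) (by linarith)
  rw [Ifun, intervalIntegral.integral_congr hM2,
    intervalIntegral.integral_sub (hA.add hB) intervalIntegrable_const,
    intervalIntegral.integral_add hA hB, intervalIntegral.integral_const_mul,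
    intervalIntegral.integral_const_mul, hsemicircle, integral_sqrt_one_two,
    intervalIntegral.integral_const, smul_eq_mul, aC, bC, cC]
  ring

theorem stmt18 :
    (∀ y ∈ Set.Icc (0 : ℝ) (1 / 4), Ifun y = aC * Real.sqrt y - bC * y) ∧
    (∀ y ∈ Set.Icc (1 / 4 : ℝ) (1 / 2),
      Ifun y = aC * Real.sqrt y - bC * y +
        cC * (Real.pi * y ^ 2 - (1 - 2 * y) * Real.sqrt (y - 1 / 4) -
          2 * y ^ 2 * Real.arcsin (1 / (2 * y) - 1))) ∧
    (∀ y ∈ Set.Icc (1 / 2 : ℝ) 1,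
      Ifun y = aC * Real.sqrt y - bC * y +
        cC * (2 * y ^ 2 * (Real.arcsin (1 / y - 1) - Real.arcsin (1 / (2 * y) - 1)) -
          (1 - 2 * y) * Real.sqrt (y - 1 / 4) + 2 * (1 - y) * Real.sqrt (2 * y - 1))) := by
  refine ⟨fun y ⟨hy₀, hy₁⟩ => ?_, fun y ⟨hy₀, hy₁⟩ => ?_, fun y ⟨hy₀, hy₁⟩ => ?_⟩
  · rw [Ifun_eq_semicircleArea hy₀ (by linarith), semicircleArea_of_le (by linarith) (by linarith),
      semicircleArea_of_le (by linarith) (by linarith)]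
    ring
  · rw [Ifun_eq_semicircleArea (by linarith) (by linarith),
      semicircleArea_of_le (by linarith) (by linarith),
      semicircleArea_one_sub_two_mul (by linarith)]
    ring
  · rw [Ifun_eq_semicircleArea (by linarith) hy₁, semicircleArea_two_sub_two_mul (by linarith),
      semicircleArea_one_sub_two_mul (by linarith)]
    ring
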